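/- arXiv:1804.05991 — 2 statements merged into one kernel-verified Lean document; each statement's English description precedes it below -/
import Mathlib

section
/- Let n ≥ 3 be an integer and p > 1. With f(r) = (1−r²)^{n−2}/r^{n−1}, G(r) = ∫_r^1 f(t) dt, and V_p(r) = f(r)²(1−r²)²/(4(n−2)² G(r)^{(p+2)/2}) for r ∈ (0,1), one has lim_{r→0⁺} r^{n(1−p/2⋆)} V_p(r) = (n−2)^{(p−2)/2}/4, where 2⋆ = 2n/(n−2); that is, V_p(r) = c₀(n,p) r^{−n(1−p/2⋆)}(1+o(1)) as r→0⁺ with c₀(n,p) = (n−2)^{(p−2)/2}/4. In particular lim_{r→0⁺} r² V₂(r) = 1/4. -/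
/-! With `n = m + 2`, the integrand satisfies `(1 - r)^m / t^(m+1) ≤ f t ≤ 1 / t^(m+1)` for
`t ∈ [r, √r]` resp. `t ∈ (0, 1]`, so `r^m G(r)` is squeezed between `(1 - r)^m (1 - √r^m) / m`
and `(1 - r^m) / m` and tends to `1 / m`. The exponent `n (1 - p / 2⋆) = m + 2 - p m / 2` is
exactly the one for which `r^(n (1 - p / 2⋆)) V_p(r) = (1 - r²)^(2m+2) / (4 m² (r^m G(r))^((p+2)/2))`,
and the right side tends to `m^((p-2)/2) / 4`. -/

open Real Filter Set

/-- `f n r = (1 - r²)^(n-2) / r^(n-1)`. -/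
noncomputable def f (n : ℕ) (r : ℝ) : ℝ := (1 - r ^ 2) ^ (n - 2) / r ^ (n - 1)

/-- `G n r = ∫_r^1 f n t dt`. -/
noncomputable def G (n : ℕ) (r : ℝ) : ℝ := ∫ t in r..(1 : ℝ), f n t

/-- `V n p r = f(r)²(1-r²)² / (4(n-2)² G(r)^((p+2)/2))`. -/
noncomputable def V (n : ℕ) (p r : ℝ) : ℝ :=
  f n r ^ 2 * (1 - r ^ 2) ^ 2 / (4 * ((n : ℝ) - 2) ^ 2 * G n r ^ ((p + 2) / 2))

open Topology

lemma f_add_two (m : ℕ) (t : ℝ) : f (m + 2) t = (1 - t ^ 2) ^ m / t ^ (m + 1) := by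
  simp [f]

lemma intervalIntegrable_f (n : ℕ) {a b : ℝ} (ha : 0 < a) (hb : 0 < b) :
    IntervalIntegrable (f n) MeasureTheory.volume a b := by
  refine ContinuousOn.intervalIntegrable (ContinuousOn.div (by fun_prop) (by fun_prop) ?_)
  intro t ht
  exact pow_ne_zero _ (lt_of_lt_of_le (lt_min ha hb) ht.1).ne'

lemma intervalIntegrable_inv_pow {a b : ℝ} (ha : 0 < a) (hb : 0 < b) (k : ℕ) :
    IntervalIntegrable (fun t : ℝ => (t ^ k)⁻¹) MeasureTheory.volume a b := by
  refine ContinuousOn.intervalIntegrable (ContinuousOn.inv₀ (by fun_prop) ?_)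
  intro t ht
  exact pow_ne_zero _ (lt_of_lt_of_le (lt_min ha hb) ht.1).ne'

lemma integral_inv_pow_succ {m : ℕ} (hm : m ≠ 0) {a b : ℝ} (ha : 0 < a) (hb : 0 < b) :
    ∫ t in a..b, (t ^ (m + 1))⁻¹ = ((a ^ m)⁻¹ - (b ^ m)⁻¹) / m := by
  have h0 : (0 : ℝ) ∉ uIcc a b := fun h => (lt_min ha hb).not_ge h.1
  have hz := integral_zpow (a := a) (b := b) (n := -((m + 1 : ℕ) : ℤ))
    (Or.inr ⟨by omega, h0⟩)
  simp only [zpow_neg, zpow_natCast] at hz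
  rw [hz, show -((m + 1 : ℕ) : ℤ) + 1 = -(m : ℤ) by push_cast; ring]
  simp only [zpow_neg, zpow_natCast]
  push_cast
  rw [show -((m : ℝ) + 1) + 1 = -m by ring, div_neg, ← neg_div]
  ring

lemma f_le_inv_pow {m : ℕ} {t : ℝ} (ht0 : 0 < t) (ht1 : t ≤ 1) :
    f (m + 2) t ≤ (t ^ (m + 1))⁻¹ := by
  rw [f_add_two, div_eq_mul_inv]
  exact mul_le_of_le_one_left (by positivity) (pow_le_one₀ (by nlinarith) (by nlinarith))

lemma mul_inv_pow_le_f {m : ℕ} {r t : ℝ} (ht0 : 0 < t) (htr : t ^ 2 ≤ r) (hr1 : r ≤ 1) :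
    (1 - r) ^ m * (t ^ (m + 1))⁻¹ ≤ f (m + 2) t := by
  rw [f_add_two, div_eq_mul_inv]
  gcongr

lemma pow_mul_G_le {m : ℕ} (hm : m ≠ 0) {r : ℝ} (hr0 : 0 < r) (hr1 : r ≤ 1) :
    r ^ m * G (m + 2) r ≤ (1 - r ^ m) / m := by
  have hG : G (m + 2) r ≤ ((r ^ m)⁻¹ - 1) / m :=
    calc G (m + 2) r ≤ ∫ t in r..1, (t ^ (m + 1))⁻¹ :=
          intervalIntegral.integral_mono_on hr1 (intervalIntegrable_f _ hr0 one_pos)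
            (intervalIntegrable_inv_pow hr0 one_pos _)
            fun t ht => f_le_inv_pow (hr0.trans_le ht.1) ht.2
      _ = ((r ^ m)⁻¹ - 1) / m := by rw [integral_inv_pow_succ hm hr0 one_pos, one_pow, inv_one]
  calc r ^ m * G (m + 2) r ≤ r ^ m * (((r ^ m)⁻¹ - 1) / m) := by gcongr
    _ = (1 - r ^ m) / m := by field_simp

lemma le_pow_mul_G {m : ℕ} (hm : m ≠ 0) {r : ℝ} (hr0 : 0 < r) (hr1 : r ≤ 1) :
    (1 - r) ^ m * (1 - √r ^ m) / m ≤ r ^ m * G (m + 2) r := by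
  have hs0 : 0 < √r := Real.sqrt_pos.mpr hr0
  have hs1 : √r ≤ 1 := Real.sqrt_le_one.mpr hr1
  have hsq : √r ^ 2 = r := Real.sq_sqrt hr0.le
  have hrs : r ≤ √r := by nlinarith
  have hhead : ∫ t in r..√r, f (m + 2) t ≤ G (m + 2) r := by
    rw [G, ← intervalIntegral.integral_add_adjacent_intervals
      (intervalIntegrable_f _ hr0 hs0) (intervalIntegrable_f _ hs0 one_pos)]
    refine le_add_of_nonneg_right (intervalIntegral.integral_nonneg hs1 fun t ht => ?_)
    have ht0 : 0 < t := hs0.trans_le ht.1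
    rw [f_add_two]
    exact div_nonneg (pow_nonneg (by nlinarith [ht.2]) _) (by positivity)
  have hG : (1 - r) ^ m * ((r ^ m)⁻¹ - (√r ^ m)⁻¹) / m ≤ G (m + 2) r := calc
    (1 - r) ^ m * ((r ^ m)⁻¹ - (√r ^ m)⁻¹) / m
        = ∫ t in r..√r, (1 - r) ^ m * (t ^ (m + 1))⁻¹ := by
          rw [intervalIntegral.integral_const_mul, integral_inv_pow_succ hm hr0 hs0, mul_div_assoc]
    _ ≤ ∫ t in r..√r, f (m + 2) t :=
          intervalIntegral.integral_mono_on hrs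
            ((intervalIntegrable_inv_pow hr0 hs0 _).const_mul _) (intervalIntegrable_f _ hr0 hs0)
            fun t ht => mul_inv_pow_le_f (hr0.trans_le ht.1)
              (hsq ▸ pow_le_pow_left₀ (hr0.trans_le ht.1).le ht.2 2) hr1
    _ ≤ G (m + 2) r := hhead
  calc (1 - r) ^ m * (1 - √r ^ m) / m
      = r ^ m * ((1 - r) ^ m * ((r ^ m)⁻¹ - (√r ^ m)⁻¹) / m) := by
        generalize √r = s at hs0 hsq ⊢
        subst hsq
        field_simp
        ring
    _ ≤ r ^ m * G (m + 2) r := by gcongr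

lemma tendsto_pow_mul_G {m : ℕ} (hm : m ≠ 0) :
    Tendsto (fun r => r ^ m * G (m + 2) r) (𝓝[>] 0) (𝓝 (1 / m)) := by
  have hlow : Tendsto (fun r : ℝ => (1 - r) ^ m * (1 - √r ^ m) / m) (𝓝[>] 0) (𝓝 (1 / m)) := by
    have h := ((Continuous.tendsto (by fun_prop) 0).mono_left nhdsWithin_le_nhds :
      Tendsto (fun r : ℝ => (1 - r) ^ m * (1 - √r ^ m) / m) (𝓝[>] 0) _)
    simpa [hm] using h
  have hup : Tendsto (fun r : ℝ => (1 - r ^ m) / m) (𝓝[>] 0) (𝓝 (1 / m)) := by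
    have h := ((Continuous.tendsto (by fun_prop) 0).mono_left nhdsWithin_le_nhds :
      Tendsto (fun r : ℝ => (1 - r ^ m) / m) (𝓝[>] 0) _)
    simpa [hm] using h
  have hIoc : Ioc (0 : ℝ) 1 ∈ 𝓝[>] 0 := Ioc_mem_nhdsGT one_pos
  refine tendsto_of_tendsto_of_tendsto_of_le_of_le' hlow hup ?_ ?_
  · filter_upwards [hIoc] with r hr using le_pow_mul_G hm hr.1 hr.2
  · filter_upwards [hIoc] with r hr using pow_mul_G_le hm hr.1 hr.2

lemma G_pos (n : ℕ) {r : ℝ} (hr0 : 0 < r) (hr1 : r < 1) : 0 < G n r := by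
  refine intervalIntegral.intervalIntegral_pos_of_pos_on (intervalIntegrable_f n hr0 one_pos)
    (fun t ht => ?_) hr1
  have ht0 : 0 < t := hr0.trans ht.1
  have : 0 < 1 - t ^ 2 := by nlinarith [ht.2]
  unfold f
  positivity

lemma rpow_mul_V_eq {m : ℕ} (hm : m ≠ 0) (p : ℝ) {r : ℝ} (hr0 : 0 < r) (hG : 0 < G (m + 2) r) :
    r ^ (((m + 2 : ℕ) : ℝ) * (1 - p / (2 * ((m + 2 : ℕ) : ℝ) / m))) *
        V (m + 2) p r =
      (1 - r ^ 2) ^ (2 * m + 2) / (4 * m ^ 2 * (r ^ m * G (m + 2) r) ^ ((p + 2) / 2)) := by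
  have hmR : (m : ℝ) ≠ 0 := Nat.cast_ne_zero.mpr hm
  have hexp : r ^ (((m + 2 : ℕ) : ℝ) * (1 - p / (2 * ((m + 2 : ℕ) : ℝ) / m)))
      * (r ^ m) ^ ((p + 2) / 2) = r ^ (2 * m + 2) := by
    rw [← rpow_natCast, ← rpow_natCast, ← rpow_mul hr0.le, ← rpow_add hr0]
    congr 1
    push_cast
    field_simp
    ring
  rw [V, f_add_two, mul_rpow (by positivity) hG.le,
    eq_div_of_mul_eq (by positivity) hexp]
  push_cast
  rw [add_sub_cancel_right]
  field_simp
  ring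

lemma tendsto_rpow_mul_V {n : ℕ} (hn : 3 ≤ n) (p : ℝ) :
    Tendsto (fun r : ℝ => r ^ ((n : ℝ) * (1 - p / (2 * (n : ℝ) / ((n : ℝ) - 2)))) * V n p r)
      (𝓝[>] 0) (𝓝 (((n : ℝ) - 2) ^ ((p - 2) / 2) / 4)) := by
  obtain ⟨m, rfl⟩ : ∃ m, n = m + 2 := ⟨n - 2, by omega⟩
  have hm : m ≠ 0 := by omega
  have hm0 : (0 : ℝ) < m := by positivity
  have hlim : Tendsto (fun r : ℝ => (1 - r ^ 2) ^ (2 * m + 2) /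
      (4 * m ^ 2 * (r ^ m * G (m + 2) r) ^ ((p + 2) / 2))) (𝓝[>] 0)
      (𝓝 (1 / (4 * (m : ℝ) ^ 2 * (1 / m) ^ ((p + 2) / 2)))) := by
    refine Tendsto.div ?_ (((tendsto_pow_mul_G hm).rpow_const (Or.inl (by positivity))).const_mul _)
      (by positivity)
    simpa using ((Continuous.tendsto (by fun_prop) 0).mono_left nhdsWithin_le_nhds :
      Tendsto (fun r : ℝ => (1 - r ^ 2) ^ (2 * m + 2)) (𝓝[>] 0) _)
  have hval : 1 / (4 * (m : ℝ) ^ 2 * (1 / m) ^ ((p + 2) / 2)) = (m : ℝ) ^ ((p - 2) / 2) / 4 := by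
    rw [one_div (m : ℝ), inv_rpow hm0.le, ← rpow_neg hm0.le, ← rpow_two, mul_assoc,
      ← rpow_add hm0, show 2 + -((p + 2) / 2) = -((p - 2) / 2) by ring, rpow_neg hm0.le]
    field_simp
  simp only [show ((m + 2 : ℕ) : ℝ) - 2 = m by push_cast; ring, ← hval]
  refine hlim.congr' ?_
  filter_upwards [Ioo_mem_nhdsGT one_pos] with r hr using
    (rpow_mul_V_eq hm p hr.1 (G_pos _ hr.1 hr.2)).symm

theorem stmt_2_general (n : ℕ) (hn : 3 ≤ n) (p : ℝ) :
    Tendsto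
      (fun r : ℝ =>
        r ^ ((n : ℝ) * (1 - p / (2 * (n : ℝ) / ((n : ℝ) - 2)))) * V n p r)
      (nhdsWithin 0 (Set.Ioi 0)) (nhds (((n : ℝ) - 2) ^ ((p - 2) / 2) / 4))
    ∧ Tendsto (fun r : ℝ => r ^ 2 * V n 2 r) (nhdsWithin 0 (Set.Ioi 0)) (nhds (1 / 4)) := by
  refine ⟨tendsto_rpow_mul_V hn p, ?_⟩
  have hexp : (n : ℝ) * (1 - 2 / (2 * (n : ℝ) / ((n : ℝ) - 2))) = 2 := by
    field_simp
    ring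
  simpa [hexp] using tendsto_rpow_mul_V hn 2

/-- `lim_{r→0⁺} r^{n(1-p/2⋆)} V_p(r) = (n-2)^{(p-2)/2}/4` where `2⋆ = 2n/(n-2)`;
in particular `lim_{r→0⁺} r² V₂(r) = 1/4`. -/
theorem stmt_2 (n : ℕ) (hn : 3 ≤ n) (p : ℝ) (hp : 1 < p) :
    Tendsto
      (fun r : ℝ =>
        r ^ ((n : ℝ) * (1 - p / (2 * (n : ℝ) / ((n : ℝ) - 2)))) * V n p r)
      (nhdsWithin 0 (Set.Ioi 0)) (nhds (((n : ℝ) - 2) ^ ((p - 2) / 2) / 4))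
    ∧ Tendsto (fun r : ℝ => r ^ 2 * V n 2 r) (nhdsWithin 0 (Set.Ioi 0)) (nhds (1 / 4)) :=
  stmt_2_general n hn p
end

section
/- Let n ≥ 3 be an integer and p > 1. With f(r) = (1−r²)^{n−2}/r^{n−1}, G(r) = ∫_r^1 f(t) dt, and V_p(r) = f(r)²(1−r²)²/(4(n−2)² G(r)^{(p+2)/2}) for r ∈ (0,1), one has lim_{r→1⁻} (1−r)^{(n−1)(p−2)/2} V_p(r) = (2^{2n−2}/(4(n−2)²))·((n−1)/2^{n−2})^{(p+2)/2}, a finite positive number; that is, V_p(r) = c₁(n,p)(1−r)^{−(n−1)(p−2)/2}(1+o(1)) as r→1⁻. In particular, lim_{r→1⁻} V₂(r) = ((n−1)/(n−2))², so V₂ has a finite positive limit at r = 1. -/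
/-!
Near `r = 1` the integrand is
`f r = (1 - r)^(n-2) (1 + r)^(n-2) / r^(n-1) ≈ 2^(n-2) (1 - r)^(n-2)`,
so by l'Hôpital `G r ~ 2^(n-2) (1 - r)^(n-1) / (n - 1)`. Since
`f² (1 - r²)² = ((1 - r)(1 + r) / r)^(2n-2)`, the power `(1 - r)^((n-1)(p-2)/2)` exactly cancels
the vanishing factors of `V_p`, which leaves a quotient of functions with nonzero limits.
-/

open Real Filter Set

open Topology

lemma f_eq_mul (n : ℕ) (r : ℝ) :
    f n r = (1 - r) ^ (n - 2) * ((1 + r) ^ (n - 2) / r ^ (n - 1)) := by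
  rw [f, show 1 - r ^ 2 = (1 - r) * (1 + r) by ring, mul_pow, mul_div_assoc]

lemma f_sq_mul_sq (n : ℕ) (hn : 2 ≤ n) (r : ℝ) :
    f n r ^ 2 * (1 - r ^ 2) ^ 2 = ((1 - r) * (1 + r) / r) ^ (2 * n - 2) := by
  rw [f, div_pow, ← pow_mul, ← pow_mul, div_mul_eq_mul_div, ← pow_add, div_pow,
    show 1 - r ^ 2 = (1 - r) * (1 + r) by ring]
  congr 2 <;> omega

lemma f_pos (n : ℕ) {r : ℝ} (hr0 : 0 < r) (hr1 : r < 1) : 0 < f n r := by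
  have : 0 < 1 - r ^ 2 := by nlinarith
  unfold f
  positivity

lemma continuousAt_f (n : ℕ) {r : ℝ} (hr : r ≠ 0) : ContinuousAt (f n) r :=
  ContinuousAt.div (by fun_prop) (by fun_prop) (pow_ne_zero _ hr)

lemma hasDerivAt_G (n : ℕ) {r : ℝ} (hr : 0 < r) : HasDerivAt (G n) (-f n r) r :=
  intervalIntegral.integral_hasDerivAt_left (intervalIntegrable_f n hr one_pos)
    (ContinuousAt.stronglyMeasurableAtFilter isOpen_Ioi
      (fun _ hx => continuousAt_f n (ne_of_gt hx)) r hr)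
    (continuousAt_f n hr.ne')

lemma tendsto_G_nhdsLT_one (n : ℕ) : Tendsto (G n) (𝓝[<] 1) (𝓝 0) := by
  have h := (hasDerivAt_G n one_pos).continuousAt.continuousWithinAt (s := Iio 1)
  rwa [ContinuousWithinAt, G, intervalIntegral.integral_same] at h

lemma eventually_mem_Ioo_nhdsLT_one : ∀ᶠ r in 𝓝[<] (1 : ℝ), r ∈ Ioo 0 1 :=
  Ioo_mem_nhdsLT one_pos

lemma tendsto_G_div_one_sub_pow (n : ℕ) (hn : 2 ≤ n) :
    Tendsto (fun r => G n r / (1 - r) ^ (n - 1)) (𝓝[<] 1)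
      (𝓝 (2 ^ (n - 2) / ((n : ℝ) - 1))) := by
  have hn1 : ((n - 1 : ℕ) : ℝ) = (n : ℝ) - 1 := Nat.cast_pred (by omega)
  have hn1pos : (0 : ℝ) < (n : ℝ) - 1 := by rw [← hn1]; exact_mod_cast (by omega : 0 < n - 1)
  have hratio : Tendsto (fun r : ℝ => (1 + r) ^ (n - 2) / r ^ (n - 1) / ((n : ℝ) - 1))
      (𝓝[<] 1) (𝓝 (2 ^ (n - 2) / ((n : ℝ) - 1))) := by
    have hc : ContinuousAt (fun r : ℝ => (1 + r) ^ (n - 2) / r ^ (n - 1) / ((n : ℝ) - 1)) 1 :=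
      (ContinuousAt.div (by fun_prop) (by fun_prop) (by simp)).div_const _
    simpa [one_add_one_eq_two] using hc.tendsto.mono_left (nhdsWithin_le_nhds (s := Iio 1))
  refine HasDerivAt.lhopital_zero_nhdsLT (f' := fun r => -f n r)
    (g' := fun r => -(((n : ℝ) - 1) * (1 - r) ^ (n - 2))) ?_ ?_ ?_ (tendsto_G_nhdsLT_one n) ?_ ?_
  · filter_upwards [eventually_mem_Ioo_nhdsLT_one] with r hr using hasDerivAt_G n hr.1
  · refine Eventually.of_forall fun r => ?_
    refine (((hasDerivAt_id r).const_sub 1).pow (n - 1)).congr_deriv ?_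
    rw [hn1, show n - 1 - 1 = n - 2 by omega]
    simp
  · filter_upwards [eventually_mem_Ioo_nhdsLT_one] with r hr
    have : 0 < 1 - r := sub_pos.2 hr.2
    simp only [ne_eq, neg_eq_zero]
    positivity
  · have hc : ContinuousAt (fun r : ℝ => (1 - r) ^ (n - 1)) 1 := by fun_prop
    simpa [zero_pow (by omega : n - 1 ≠ 0)] using
      hc.tendsto.mono_left (nhdsWithin_le_nhds (s := Iio 1))
  · refine hratio.congr' ?_
    filter_upwards [eventually_mem_Ioo_nhdsLT_one] with r hr
    have : (1 - r) ^ (n - 2) ≠ 0 := pow_ne_zero _ (sub_pos.2 hr.2).ne'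
    rw [f_eq_mul, neg_div_neg_eq]
    field_simp

lemma one_sub_rpow_mul_V_eq (n : ℕ) (hn : 2 ≤ n) (q : ℝ) {r : ℝ} (hr0 : 0 < r)
    (hr1 : r < 1) :
    (1 - r) ^ (((n : ℝ) - 1) * (q - 2) / 2) * V n q r =
      ((1 + r) / r) ^ (2 * n - 2) /
        (4 * ((n : ℝ) - 2) ^ 2 * (G n r / (1 - r) ^ (n - 1)) ^ ((q + 2) / 2)) := by
  have hu : 0 < 1 - r := sub_pos.2 hr1
  set Q := G n r / (1 - r) ^ (n - 1)
  have hQ : 0 < Q := div_pos (G_pos n hr0 hr1) (pow_pos hu _)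
  have hn1 : ((n - 1 : ℕ) : ℝ) = (n : ℝ) - 1 := Nat.cast_pred (by omega)
  have hG : G n r ^ ((q + 2) / 2) =
      Q ^ ((q + 2) / 2) * (1 - r) ^ (((n : ℝ) - 1) * ((q + 2) / 2)) := by
    rw [← div_mul_cancel₀ (G n r) (pow_ne_zero (n - 1) hu.ne'), mul_rpow hQ.le (by positivity),
      ← rpow_natCast, ← rpow_mul hu.le, hn1]
  have hexp : (1 - r) ^ (((n : ℝ) - 1) * (q - 2) / 2) * (1 - r) ^ (2 * n - 2) =
      (1 - r) ^ (((n : ℝ) - 1) * ((q + 2) / 2)) := by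
    rw [← rpow_natCast, ← rpow_add hu, show 2 * n - 2 = 2 * (n - 1) by omega, Nat.cast_mul, hn1]
    ring_nf
  rw [V, f_sq_mul_sq n (by omega), hG, mul_div_assoc (1 - r), mul_pow, ← hexp]
  have : 0 < Q ^ ((q + 2) / 2) := rpow_pos_of_pos hQ _
  field_simp

lemma tendsto_one_sub_rpow_mul_V (n : ℕ) (hn : 3 ≤ n) (q : ℝ) :
    Tendsto (fun r => (1 - r) ^ (((n : ℝ) - 1) * (q - 2) / 2) * V n q r) (𝓝[<] 1)
      (𝓝 ((2 : ℝ) ^ (2 * n - 2) / (4 * ((n : ℝ) - 2) ^ 2) *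
        (((n : ℝ) - 1) / 2 ^ (n - 2)) ^ ((q + 2) / 2))) := by
  have hn2 : (0 : ℝ) < (n : ℝ) - 2 := by
    have : (3 : ℝ) ≤ n := by exact_mod_cast hn
    linarith
  set c : ℝ := 2 ^ (n - 2) / ((n : ℝ) - 1)
  have hc : 0 < c := div_pos (by positivity) (by linarith)
  have hnum : Tendsto (fun r : ℝ => ((1 + r) / r) ^ (2 * n - 2)) (𝓝[<] 1)
      (𝓝 (2 ^ (2 * n - 2))) := by
    have : ContinuousAt (fun r : ℝ => ((1 + r) / r) ^ (2 * n - 2)) 1 := by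
      fun_prop (disch := norm_num)
    simpa [one_add_one_eq_two] using this.tendsto.mono_left (nhdsWithin_le_nhds (s := Iio 1))
  have hden := ((tendsto_G_div_one_sub_pow n (by omega)).rpow_const (p := (q + 2) / 2)
    (Or.inl hc.ne')).const_mul (4 * ((n : ℝ) - 2) ^ 2)
  have hcs : 0 < c ^ ((q + 2) / 2) := rpow_pos_of_pos hc _
  have hlim : (2 : ℝ) ^ (2 * n - 2) / (4 * ((n : ℝ) - 2) ^ 2) *
      (((n : ℝ) - 1) / 2 ^ (n - 2)) ^ ((q + 2) / 2) =
      2 ^ (2 * n - 2) / (4 * ((n : ℝ) - 2) ^ 2 * c ^ ((q + 2) / 2)) := by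
    rw [show ((n : ℝ) - 1) / 2 ^ (n - 2) = c⁻¹ from (inv_div _ _).symm, inv_rpow hc.le]
    field_simp
  rw [hlim]
  refine (hnum.div hden (by positivity)).congr' ?_
  filter_upwards [eventually_mem_Ioo_nhdsLT_one] with r hr
  exact (one_sub_rpow_mul_V_eq n (by omega) q hr.1 hr.2).symm

theorem stmt_3_general (n : ℕ) (hn : 3 ≤ n) (p : ℝ) :
    Tendsto (fun r : ℝ => (1 - r) ^ (((n : ℝ) - 1) * (p - 2) / 2) * V n p r)
      (nhdsWithin 1 (Set.Iio 1))
      (nhds (((2 : ℝ) ^ (2 * n - 2) / (4 * ((n : ℝ) - 2) ^ 2)) *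
        (((n : ℝ) - 1) / (2 : ℝ) ^ (n - 2)) ^ ((p + 2) / 2)))
    ∧ Tendsto (fun r : ℝ => V n 2 r) (nhdsWithin 1 (Set.Iio 1))
      (nhds ((((n : ℝ) - 1) / ((n : ℝ) - 2)) ^ 2)) := by
  refine ⟨tendsto_one_sub_rpow_mul_V n hn p, ?_⟩
  have h := tendsto_one_sub_rpow_mul_V n hn 2
  have hconst : (2 : ℝ) ^ (2 * n - 2) / (4 * ((n : ℝ) - 2) ^ 2) *
      (((n : ℝ) - 1) / 2 ^ (n - 2)) ^ (((2 : ℝ) + 2) / 2) =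
      (((n : ℝ) - 1) / ((n : ℝ) - 2)) ^ 2 := by
    rw [show ((2 : ℝ) + 2) / 2 = (2 : ℕ) by norm_num, rpow_natCast,
      show 2 * n - 2 = 2 + (n - 2) * 2 by omega, pow_add, pow_mul]
    field_simp
    ring
  simpa only [sub_self, mul_zero, zero_div, rpow_zero, one_mul, hconst] using h

/-- `lim_{r→1⁻} (1-r)^{(n-1)(p-2)/2} V_p(r)
  = (2^{2n-2}/(4(n-2)²))·((n-1)/2^{n-2})^{(p+2)/2}`;
in particular `lim_{r→1⁻} V₂(r) = ((n-1)/(n-2))²`. -/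
theorem stmt_3 (n : ℕ) (hn : 3 ≤ n) (p : ℝ) (hp : 1 < p) :
    Tendsto (fun r : ℝ => (1 - r) ^ (((n : ℝ) - 1) * (p - 2) / 2) * V n p r)
      (nhdsWithin 1 (Set.Iio 1))
      (nhds (((2 : ℝ) ^ (2 * n - 2) / (4 * ((n : ℝ) - 2) ^ 2)) *
        (((n : ℝ) - 1) / (2 : ℝ) ^ (n - 2)) ^ ((p + 2) / 2)))
    ∧ Tendsto (fun r : ℝ => V n 2 r) (nhdsWithin 1 (Set.Iio 1))
      (nhds ((((n : ℝ) - 1) / ((n : ℝ) - 2)) ^ 2)) :=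
  stmt_3_general n hn p
end
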